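/- Let ρ : P → M be a proper 2-Lipschitz map between metric spaces such that ρ restricted to a closed subset identified with M is the identity. If M is divergent-paths-complete (every locally Lipschitz divergent path in M has infinite length), then P is divergent-paths-complete. -/

import Mathlib

open Set Filter
open scoped ENNReal NNReal

/-- Length of a path sampled at strictly increasing partition points in `S`. -/
noncomputable def pathLength {X : Type*} [PseudoEMetricSpace X] (γ : ℝ → X) (S : Set ℝ) : ℝ≥0∞ :=
  ⨆ (n : ℕ) (s : {s : Fin (n + 1) → ℝ // StrictMono s ∧ ∀ i, s i ∈ S}),
    ∑ i : Fin n, edist (γ (s.1 i.castSucc)) (γ (s.1 i.succ))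

/-- A path `γ : [0,a) → X` is divergent if it eventually leaves every compact subset of `X`. -/
def IsDivergentPath {X : Type*} [TopologicalSpace X] (γ : ℝ → X) (a : ℝ) : Prop :=
  ∀ K : Set X, IsCompact K → ∃ T ∈ Set.Ico (0 : ℝ) a, ∀ t ∈ Set.Ico T a, γ t ∉ K

/-- `γ` is locally Lipschitz on `[0,a)`. -/
def LocallyLipschitzPathOn {X : Type*} [PseudoMetricSpace X] (γ : ℝ → X) (a : ℝ) : Prop :=
  ∀ t ∈ Set.Ico (0 : ℝ) a, ∃ ε > (0 : ℝ), ∃ C : NNReal,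
    LipschitzOnWith C γ (Set.Ico 0 a ∩ Metric.ball t ε)

/-- A metric space is divergent-paths-complete if every locally Lipschitz divergent path
`γ : [0,1) → X` has infinite length. -/
def DivergentPathsComplete (X : Type*) [MetricSpace X] : Prop :=
  ∀ γ : ℝ → X, LocallyLipschitzPathOn γ 1 → IsDivergentPath γ 1 →
    pathLength γ (Set.Ico 0 1) = ⊤

/-!
The retraction `ρ` pushes a divergent locally Lipschitz path `γ` in `P` to a path `ρ ∘ γ` in `M`
which is again locally Lipschitz and, `ρ` being proper, again divergent. Hence `ρ ∘ γ` has infinite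
length, and since `ρ` is Lipschitz the length of `γ` is at least half of it.
-/

theorem LocallyLipschitzPathOn.comp {X Y : Type*} [PseudoMetricSpace X] [PseudoMetricSpace Y]
    {f : X → Y} {K : ℝ≥0} (hf : LipschitzWith K f) {γ : ℝ → X} {a : ℝ}
    (hγ : LocallyLipschitzPathOn γ a) : LocallyLipschitzPathOn (f ∘ γ) a := by
  intro t ht
  obtain ⟨ε, hε, C, hC⟩ := hγ t ht
  exact ⟨ε, hε, K * C, hf.comp_lipschitzOnWith hC⟩

theorem IsDivergentPath.comp {X Y : Type*} [TopologicalSpace X] [TopologicalSpace Y]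
    {f : X → Y} (hf : ∀ K : Set Y, IsCompact K → IsCompact (f ⁻¹' K)) {γ : ℝ → X} {a : ℝ}
    (hγ : IsDivergentPath γ a) : IsDivergentPath (f ∘ γ) a :=
  fun K hK => hγ (f ⁻¹' K) (hf K hK)

theorem pathLength_comp_le {X Y : Type*} [PseudoEMetricSpace X] [PseudoEMetricSpace Y]
    {f : X → Y} {K : ℝ≥0} (hf : LipschitzWith K f) (γ : ℝ → X) (S : Set ℝ) :
    pathLength (f ∘ γ) S ≤ K * pathLength γ S := by
  refine iSup₂_le fun n s => ?_
  calc ∑ i : Fin n, edist (f (γ (s.1 i.castSucc))) (f (γ (s.1 i.succ)))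
      ≤ ∑ i : Fin n, K * edist (γ (s.1 i.castSucc)) (γ (s.1 i.succ)) :=
        Finset.sum_le_sum fun i _ => hf _ _
    _ = K * ∑ i : Fin n, edist (γ (s.1 i.castSucc)) (γ (s.1 i.succ)) :=
        (Finset.mul_sum ..).symm
    _ ≤ K * pathLength γ S := by
        gcongr
        exact le_iSup_of_le n (le_iSup_of_le s le_rfl)

theorem pathLength_eq_top_of_comp {X Y : Type*} [PseudoEMetricSpace X] [PseudoEMetricSpace Y]
    {f : X → Y} {K : ℝ≥0} (hf : LipschitzWith K f) {γ : ℝ → X} {S : Set ℝ}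
    (h : pathLength (f ∘ γ) S = ⊤) : pathLength γ S = ⊤ := by
  by_contra hfin
  have hlt : (K : ℝ≥0∞) * pathLength γ S < ⊤ :=
    ENNReal.mul_lt_top ENNReal.coe_lt_top (lt_top_iff_ne_top.2 hfin)
  exact (h ▸ pathLength_comp_le hf γ S).not_gt hlt

theorem divergentPathsComplete_of_proper_retraction_general
    {P M : Type*} [MetricSpace P] [MetricSpace M] (ρ : P → M)
    (hlip : LipschitzWith 2 ρ)
    (hproper : ∀ K : Set M, IsCompact K → IsCompact (ρ ⁻¹' K))
    (hM : DivergentPathsComplete M) :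
    DivergentPathsComplete P := fun γ hloc hdiv =>
  pathLength_eq_top_of_comp hlip (hM (ρ ∘ γ) (hloc.comp hlip) (hdiv.comp hproper))

/-- If `ρ : P → M` is a proper `2`-Lipschitz map restricting to the identity on a closed
isometric copy of `M` inside `P`, and `M` is divergent-paths-complete, then so is `P`. -/
theorem divergentPathsComplete_of_proper_retraction
    {P M : Type*} [MetricSpace P] [MetricSpace M] (ρ : P → M)
    (hlip : LipschitzWith 2 ρ)
    (hproper : ∀ K : Set M, IsCompact K → IsCompact (ρ ⁻¹' K))
    (ι : M → P) (hι : Isometry ι) (hclosed : IsClosed (Set.range ι))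
    (hretr : ∀ x : M, ρ (ι x) = x)
    (hM : DivergentPathsComplete M) :
    DivergentPathsComplete P :=
  divergentPathsComplete_of_proper_retraction_general ρ hlip hproper hM
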